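/- arXiv:1209.6483 — 6 statements merged into one kernel-verified Lean document; each statement's English description precedes it below -/
import Mathlib

section
/- Let V and V′ be finite-dimensional complex graded vector spaces with involutions ρ, ρ′ satisfying ρ(V_p) = V_{w−p}, ρ′(V′_q) = V′_{w′−q}, with all graded pieces of dimension at most 1. Suppose dim V is even and dim V′ is odd, with ε′ the scalar by which ρ′ acts on the middle piece of V′. Then d⁺(V ⊗ V′) = d⁻(V ⊗ V′) = dim V · dim V′ / 2 for the involution ρ ⊗ ρ′. -/
/-!
For an involution `σ`, the projection `(1 + σ)/2` onto the `+1`-eigenspace gives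
`2 d⁺ = dim + tr σ` and `2 d⁻ = dim - tr σ`; so it suffices that
`tr (ρ ⊗ ρ') = tr ρ · tr ρ'` vanishes. Since `ρ` maps `V_p` to `V_{w-p}`, only the middle
piece `V_{w/2}` contributes to `tr ρ`. Applying the eigenspace count to `ρ` on `V` and on
`V_{w/2}`, whose traces agree, shows that `dim V ≡ dim V_{w/2} (mod 2)`; as `dim V` is even
and `dim V_{w/2} ≤ 1`, the middle piece vanishes and `tr ρ = 0`.
-/

open Module LinearMap TensorProduct

section Involution

variable {K V : Type*} [Field K] [NeZero (2 : K)] [AddCommGroup V] [Module K V]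

theorem isProj_half_smul_id_add (σ : V →ₗ[K] V) (hσ : σ ∘ₗ σ = LinearMap.id) :
    IsProj (ker (σ - LinearMap.id)) ((2⁻¹ : K) • (LinearMap.id + σ)) where
  map_mem x := by
    have hx : σ (σ x) = x := LinearMap.congr_fun hσ x
    simp only [mem_ker, LinearMap.sub_apply, LinearMap.smul_apply, LinearMap.add_apply, id_apply,
      map_smul, map_add, hx]
    module
  map_id x hx := by
    rw [mem_ker, LinearMap.sub_apply, id_apply, sub_eq_zero] at hx
    simp only [LinearMap.smul_apply, LinearMap.add_apply, id_apply, hx]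
    rw [← two_smul K x, smul_smul, inv_mul_cancel₀ two_ne_zero, one_smul]

variable [FiniteDimensional K V]

theorem two_mul_finrank_ker_sub_id (σ : V →ₗ[K] V) (hσ : σ ∘ₗ σ = LinearMap.id) :
    2 * (finrank K (ker (σ - LinearMap.id)) : K) = finrank K V + trace K V σ := by
  have h := (isProj_half_smul_id_add σ hσ).trace
  rw [map_smul, map_add, trace_id, smul_eq_mul] at h
  rw [← h, ← mul_assoc, mul_inv_cancel₀ two_ne_zero, one_mul]

theorem two_mul_finrank_ker_add_id (σ : V →ₗ[K] V) (hσ : σ ∘ₗ σ = LinearMap.id) :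
    2 * (finrank K (ker (σ + LinearMap.id)) : K) = finrank K V - trace K V σ := by
  have h := two_mul_finrank_ker_sub_id (-σ) (by simpa using hσ)
  rwa [← neg_add', ker_neg, map_neg, ← sub_eq_add_neg] at h

end Involution

open DirectSum in
theorem trace_eq_trace_restrict_of_mapsTo_ne {K M ι : Type*} [Field K] [AddCommGroup M]
    [Module K M] [FiniteDimensional K M] [DecidableEq ι] [Nontrivial ι]
    {N : ι → Submodule K M}
    (hN : IsInternal N) (σ : ι → ι) (c : ι) (hσ : ∀ i ≠ c, σ i ≠ i) {f : Module.End K M}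
    (hf : ∀ i ≠ c, Set.MapsTo f (N i) (N (σ i))) (hfc : ∀ x ∈ N c, f x ∈ N c) :
    trace K M f = trace K (N c) (f.restrict hfc) := by
  obtain ⟨π, hπc, hπ⟩ : ∃ π : M →ₗ[K] N c,
      π ∘ₗ (N c).subtype = LinearMap.id ∧ ∀ i ≠ c, ∀ x ∈ N i, π x = 0 :=
    ⟨component K ι (fun i ↦ N i) c ∘ₗ (LinearEquiv.ofBijective (coeLinearMap N) hN).symm,
      LinearMap.ext fun x ↦ hN.ofBijective_coeLinearMap_same x,
      fun i hi x hx ↦ hN.ofBijective_coeLinearMap_of_mem_ne hi hx⟩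
  obtain ⟨j, hj⟩ := exists_ne c
  -- Removing the compression of `f` to `N c` leaves a map moving every piece: it is traceless.
  have hoff : trace K M (f - (N c).subtype ∘ₗ f.restrict hfc ∘ₗ π) = 0 := by
    refine trace_eq_zero_of_mapsTo_ne hN (fun i ↦ if i = c then j else σ i)
      (fun i ↦ by split_ifs with hi <;> [exact hi ▸ hj; exact hσ i hi]) fun i x hx ↦ ?_
    split_ifs with hi
    · subst hi
      have : π x = ⟨x, hx⟩ := LinearMap.congr_fun hπc ⟨x, hx⟩
      rw [LinearMap.sub_apply, comp_apply, comp_apply, this, Submodule.subtype_apply,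
        coe_restrict_apply, sub_self]
      exact zero_mem _
    · simpa [hπ i hi x hx] using hf i hi hx
  have hon : trace K M ((N c).subtype ∘ₗ f.restrict hfc ∘ₗ π) =
      trace K (N c) (f.restrict hfc) := by
    rw [← comp_assoc, trace_comp_comm']
    exact congrArg _ (LinearMap.ext fun x ↦ LinearMap.congr_fun hπc _)
  rw [← hon, ← sub_eq_zero, ← map_sub, hoff]

theorem trace_eq_zero_of_reflected_grading {K V : Type*} [Field K] [CharZero K]
    [AddCommGroup V] [Module K V] [FiniteDimensional K V]
    (Vp : ℤ → Submodule K V) (hV : DirectSum.IsInternal Vp)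
    (hVsmall : ∀ p, finrank K (Vp p) ≤ 1) (ρ : V →ₗ[K] V) (hρ : ρ ∘ₗ ρ = LinearMap.id)
    (w : ℤ) (hmap : ∀ p, Set.MapsTo ρ (Vp p) (Vp (w - p))) (heven : Even (finrank K V)) :
    trace K V ρ = 0 := by
  obtain ⟨c, rfl⟩ | ⟨c, rfl⟩ := Int.even_or_odd w
  swap
  · exact trace_eq_zero_of_mapsTo_ne hV (fun p ↦ 2 * c + 1 - p) (fun p ↦ by omega) hmap
  have hfc : ∀ x ∈ Vp c, ρ x ∈ Vp c := fun x hx ↦ by simpa using hmap c hx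
  have hρc : ρ.restrict hfc ∘ₗ ρ.restrict hfc = LinearMap.id :=
    LinearMap.ext fun x ↦ Subtype.ext (LinearMap.congr_fun hρ x)
  have htrace := trace_eq_trace_restrict_of_mapsTo_ne hV (fun p ↦ c + c - p) c
    (fun p hp ↦ by omega) (fun p _ ↦ hmap p) hfc
  have hdimV := two_mul_finrank_ker_sub_id ρ hρ
  have hdimVc := two_mul_finrank_ker_sub_id _ hρc
  rw [htrace] at hdimV ⊢
  set a := finrank K (ker (ρ - LinearMap.id))
  set b := finrank K (ker (ρ.restrict hfc - LinearMap.id))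
  have hba : b ≤ finrank K (Vp c) := Submodule.finrank_le _
  have hab : 2 * a + finrank K (Vp c) = 2 * b + finrank K V := by
    exact_mod_cast (show ((2 * a + finrank K (Vp c) : ℕ) : K) = (2 * b + finrank K V : ℕ) by
      push_cast; linear_combination hdimV - hdimVc)
  obtain ⟨hc, hb⟩ : finrank K (Vp c) = 0 ∧ b = 0 := by
    obtain ⟨k, hk⟩ := heven
    have := hVsmall c
    omega
  simpa [hc, hb] using hdimVc.symm

theorem tensor_even_odd_eigenspace_dims_general
    (V V' : Type*) [AddCommGroup V] [Module ℂ V] [FiniteDimensional ℂ V]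
    [AddCommGroup V'] [Module ℂ V'] [FiniteDimensional ℂ V']
    (Vp : ℤ → Submodule ℂ V) (hV : DirectSum.IsInternal Vp)
    (hVsmall : ∀ p, finrank ℂ (Vp p) ≤ 1)
    (ρ : V →ₗ[ℂ] V) (hρ : ρ ∘ₗ ρ = LinearMap.id)
    (ρ' : V' →ₗ[ℂ] V') (hρ' : ρ' ∘ₗ ρ' = LinearMap.id)
    (w : ℤ) (hmap : ∀ p, (Vp p).map ρ = Vp (w - p))
    (heven : Even (finrank ℂ V)) :
    finrank ℂ (LinearMap.ker (TensorProduct.map ρ ρ' - LinearMap.id)) =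
        finrank ℂ V * finrank ℂ V' / 2 ∧
    finrank ℂ (LinearMap.ker (TensorProduct.map ρ ρ' + LinearMap.id)) =
        finrank ℂ V * finrank ℂ V' / 2 := by
  have hσ : map ρ ρ' ∘ₗ map ρ ρ' = LinearMap.id := by
    rw [← map_comp, hρ, hρ', map_id]
  have htrace : trace ℂ _ (map ρ ρ') = 0 := by
    rw [trace_tensorProduct', trace_eq_zero_of_reflected_grading Vp hV hVsmall ρ hρ w
      (fun p x hx ↦ hmap p ▸ Submodule.mem_map_of_mem hx) heven, zero_mul]
  have hplus := two_mul_finrank_ker_sub_id _ hσ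
  have hminus := two_mul_finrank_ker_add_id _ hσ
  rw [htrace, finrank_tensorProduct, add_zero] at hplus
  rw [htrace, finrank_tensorProduct, sub_zero] at hminus
  norm_cast at hplus hminus
  omega

/-- V of even dimension and V′ of odd dimension, both ℤ-graded with all graded
pieces of dimension ≤ 1, with involutions ρ, ρ′ satisfying ρ(V_p) = V_{w−p} and
ρ′(V′_q) = V′_{w′−q}, and ρ′ acting by a sign ε′ on the middle piece of V′.
Then for ρ ⊗ ρ′ on V ⊗ V′ one has
d⁺(V ⊗ V′) = d⁻(V ⊗ V′) = dim V · dim V′ / 2. -/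
theorem tensor_even_odd_eigenspace_dims
    (V V' : Type*) [AddCommGroup V] [Module ℂ V] [FiniteDimensional ℂ V]
    [AddCommGroup V'] [Module ℂ V'] [FiniteDimensional ℂ V']
    (Vp : ℤ → Submodule ℂ V) (hV : DirectSum.IsInternal Vp)
    (hVsmall : ∀ p, finrank ℂ (Vp p) ≤ 1)
    (V'q : ℤ → Submodule ℂ V') (hV' : DirectSum.IsInternal V'q)
    (hV'small : ∀ q, finrank ℂ (V'q q) ≤ 1)
    (ρ : V →ₗ[ℂ] V) (hρ : ρ ∘ₗ ρ = LinearMap.id)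
    (ρ' : V' →ₗ[ℂ] V') (hρ' : ρ' ∘ₗ ρ' = LinearMap.id)
    (w w' : ℤ) (hmap : ∀ p, (Vp p).map ρ = Vp (w - p))
    (hmap' : ∀ q, (V'q q).map ρ' = V'q (w' - q))
    (heven : Even (finrank ℂ V)) (hodd : Odd (finrank ℂ V'))
    (hw' : Even w')
    (ε' : ℤ) (hε' : ε' = 1 ∨ ε' = -1)
    (hmid' : ∀ v ∈ V'q (w' / 2), ρ' v = (ε' : ℂ) • v) :
    finrank ℂ (LinearMap.ker (TensorProduct.map ρ ρ' - LinearMap.id)) =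
        finrank ℂ V * finrank ℂ V' / 2 ∧
    finrank ℂ (LinearMap.ker (TensorProduct.map ρ ρ' + LinearMap.id)) =
        finrank ℂ V * finrank ℂ V' / 2 :=
  tensor_even_odd_eigenspace_dims_general V V' Vp hV hVsmall ρ hρ ρ' hρ' w hmap heven
end

section
/- Let V and V′ be finite-dimensional complex graded vector spaces with involutions ρ, ρ′ as above, both of odd dimension, with all graded pieces of dimension ≤ 1. Let ε and ε′ be the scalars by which ρ and ρ′ act on the respective (one-dimensional) middle graded pieces. Then for the involution ρ ⊗ ρ′ on V ⊗ V′ one has d⁺(V ⊗ V′) − d⁻(V ⊗ V′) = ε · ε′. -/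
/-!
The trace of an involution is `d⁺ - d⁻`, and the trace is multiplicative on tensor products,
so it suffices to show `tr ρ = ε`. Since `ρ` sends `V_p` to `V_{w-p}`, every graded piece other
than the middle one is moved, so only the middle piece, where `ρ` acts by `ε`, contributes to
the trace.
-/

open Module LinearMap TensorProduct

namespace LinearMap

variable {K V : Type*} [Field K] [AddCommGroup V] [Module K V]

theorem isProj_ker_sub_id_of_comp_self {σ : V →ₗ[K] V} (h2 : (2 : K) ≠ 0)
    (hσ : σ ∘ₗ σ = id) :
    IsProj (ker (σ - id)) ((2⁻¹ : K) • (id + σ)) := by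
  have hσσ : ∀ x, σ (σ x) = x := fun x => congr($hσ x)
  constructor
  · intro x
    simp only [mem_ker, sub_apply, smul_apply, add_apply, id_apply, map_smul, map_add, hσσ,
      sub_add_sub_cancel, sub_self, smul_zero]
  · intro x hx
    have hfix : σ x = x := sub_eq_zero.mp (mem_ker.mp hx)
    rw [smul_apply, add_apply, id_apply, hfix, ← two_smul K x, smul_smul, inv_mul_cancel₀ h2,
      one_smul]

variable [FiniteDimensional K V]

theorem trace_eq_finrank_ker_sub_finrank_ker_of_comp_self {σ : V →ₗ[K] V} (h2 : (2 : K) ≠ 0)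
    (hσ : σ ∘ₗ σ = id) :
    trace K V σ = finrank K (ker (σ - id)) - finrank K (ker (σ + id)) := by
  have hneg : (-σ) ∘ₗ (-σ) = id := by rw [neg_comp, comp_neg, neg_neg, hσ]
  have hker : ker (-σ - id) = ker (σ + id) := by rw [← neg_add', ker_neg]
  calc trace K V σ = trace K V ((2⁻¹ : K) • (id + σ) - (2⁻¹ : K) • (id + -σ)) := by
        rw [← smul_sub, add_sub_add_left_eq_sub, sub_neg_eq_add, ← two_smul K σ, smul_smul,
          inv_mul_cancel₀ h2, one_smul]
    _ = finrank K (ker (σ - id)) - finrank K (ker (σ + id)) := by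
        rw [map_sub, (isProj_ker_sub_id_of_comp_self h2 hσ).trace,
          (isProj_ker_sub_id_of_comp_self h2 hneg).trace, hker]

variable {Vp : ℤ → Submodule K V} {ρ : V →ₗ[K] V}

theorem trace_eq_mul_finrank_of_mapsTo_of_eq_smul (hV : DirectSum.IsInternal Vp)
    {τ : ℤ → ℤ} {m : ℤ} (hτ : ∀ p, τ p = p → p = m)
    (hρ : ∀ p, Set.MapsTo ρ (Vp p) (Vp (τ p))) {c : K} (hc : ∀ v ∈ Vp m, ρ v = c • v) :
    trace K V ρ = c * finrank K (Vp m) := by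
  let e := LinearEquiv.ofBijective (DirectSum.coeLinearMap Vp) hV
  let π : V →ₗ[K] V :=
    (Vp m).subtype ∘ₗ DirectSum.component K ℤ (fun p => Vp p) m ∘ₗ e.symm.toLinearMap
  have hπ_apply : ∀ x, π x = e.symm x m := fun x => rfl
  have hπ_mem : ∀ x, π x ∈ Vp m := fun x => Submodule.coe_mem _
  have hπ_same : ∀ x ∈ Vp m, π x = x := fun x hx => by
    rw [hπ_apply, hV.ofBijective_coeLinearMap_of_mem hx]
  have hπ_ne : ∀ p ≠ m, ∀ x ∈ Vp p, π x = 0 := fun p hp x hx => by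
    rw [hπ_apply, hV.ofBijective_coeLinearMap_of_mem_ne hp hx, ZeroMemClass.coe_zero]
  have hρπ : ρ ∘ₗ π = c • π := by
    ext x
    exact hc _ (hπ_mem x)
  -- `ρ - ρ ∘ π` kills the middle piece and agrees with `ρ` elsewhere: it moves every piece.
  have hoff : trace K V (ρ - ρ ∘ₗ π) = 0 := by
    refine trace_eq_zero_of_mapsTo_ne hV (fun p => if p = m then m + 1 else τ p) ?_ ?_
    · intro p
      split_ifs with hp
      · omega
      · exact fun h => hp (hτ p h)
    · intro p x hx
      by_cases hp : p = m
      · subst hp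
        simp [hπ_same x hx]
      · simpa [hπ_ne p hp x hx, hp] using hρ p hx
  calc trace K V ρ = trace K V (ρ ∘ₗ π) + trace K V (ρ - ρ ∘ₗ π) := by
        rw [← map_add, add_sub_cancel]
    _ = c * finrank K (Vp m) := by
        rw [hoff, add_zero, hρπ, map_smul, (⟨hπ_mem, hπ_same⟩ : IsProj (Vp m) π).trace,
          smul_eq_mul]

theorem trace_eq_of_map_eq_sub_of_finrank_eq_one (hV : DirectSum.IsInternal Vp) {w : ℤ}
    (hw : Even w) (hmap : ∀ p, (Vp p).map ρ = Vp (w - p)) (hm : finrank K (Vp (w / 2)) = 1)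
    {c : K} (hc : ∀ v ∈ Vp (w / 2), ρ v = c • v) :
    trace K V ρ = c := by
  have hfix : ∀ p, w - p = p → p = w / 2 := fun p _ => by obtain ⟨k, rfl⟩ := hw; omega
  have hmapsTo : ∀ p, Set.MapsTo ρ (Vp p) (Vp (w - p)) := fun p _ hx =>
    hmap p ▸ ⟨_, hx, rfl⟩
  rw [trace_eq_mul_finrank_of_mapsTo_of_eq_smul hV hfix hmapsTo hc, hm, Nat.cast_one, mul_one]

end LinearMap

theorem tensor_odd_odd_signature_general
    (V V' : Type*) [AddCommGroup V] [Module ℂ V] [FiniteDimensional ℂ V]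
    [AddCommGroup V'] [Module ℂ V'] [FiniteDimensional ℂ V']
    (Vp : ℤ → Submodule ℂ V) (hV : DirectSum.IsInternal Vp)
    (V'q : ℤ → Submodule ℂ V') (hV' : DirectSum.IsInternal V'q)
    (ρ : V →ₗ[ℂ] V) (hρ : ρ ∘ₗ ρ = LinearMap.id)
    (ρ' : V' →ₗ[ℂ] V') (hρ' : ρ' ∘ₗ ρ' = LinearMap.id)
    (w w' : ℤ) (hmap : ∀ p, (Vp p).map ρ = Vp (w - p))
    (hmap' : ∀ q, (V'q q).map ρ' = V'q (w' - q))
    (hw : Even w) (hw' : Even w')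
    (hm : finrank ℂ (Vp (w / 2)) = 1) (hm' : finrank ℂ (V'q (w' / 2)) = 1)
    (ε ε' : ℤ)
    (hmid : ∀ v ∈ Vp (w / 2), ρ v = (ε : ℂ) • v)
    (hmid' : ∀ v ∈ V'q (w' / 2), ρ' v = (ε' : ℂ) • v) :
    (finrank ℂ (LinearMap.ker (TensorProduct.map ρ ρ' - LinearMap.id)) : ℤ) -
      (finrank ℂ (LinearMap.ker (TensorProduct.map ρ ρ' + LinearMap.id)) : ℤ) =
    ε * ε' := by
  have hinv : map ρ ρ' ∘ₗ map ρ ρ' = LinearMap.id := by rw [← map_comp, hρ, hρ', map_id]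
  have key := trace_eq_finrank_ker_sub_finrank_ker_of_comp_self two_ne_zero hinv
  rw [trace_tensorProduct', trace_eq_of_map_eq_sub_of_finrank_eq_one hV hw hmap hm hmid,
    trace_eq_of_map_eq_sub_of_finrank_eq_one hV' hw' hmap' hm' hmid'] at key
  exact_mod_cast key.symm

/-- V and V′ of odd dimension, ℤ-graded with all graded pieces of dimension ≤ 1,
involutions ρ, ρ′ with ρ(V_p) = V_{w−p}, ρ′(V′_q) = V′_{w′−q}, acting by signs
ε, ε′ on the one-dimensional middle pieces. Then for ρ ⊗ ρ′ on V ⊗ V′,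
d⁺(V ⊗ V′) − d⁻(V ⊗ V′) = ε · ε′. -/
theorem tensor_odd_odd_signature
    (V V' : Type*) [AddCommGroup V] [Module ℂ V] [FiniteDimensional ℂ V]
    [AddCommGroup V'] [Module ℂ V'] [FiniteDimensional ℂ V']
    (Vp : ℤ → Submodule ℂ V) (hV : DirectSum.IsInternal Vp)
    (hVsmall : ∀ p, finrank ℂ (Vp p) ≤ 1)
    (V'q : ℤ → Submodule ℂ V') (hV' : DirectSum.IsInternal V'q)
    (hV'small : ∀ q, finrank ℂ (V'q q) ≤ 1)
    (ρ : V →ₗ[ℂ] V) (hρ : ρ ∘ₗ ρ = LinearMap.id)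
    (ρ' : V' →ₗ[ℂ] V') (hρ' : ρ' ∘ₗ ρ' = LinearMap.id)
    (w w' : ℤ) (hmap : ∀ p, (Vp p).map ρ = Vp (w - p))
    (hmap' : ∀ q, (V'q q).map ρ' = V'q (w' - q))
    (hodd : Odd (finrank ℂ V)) (hodd' : Odd (finrank ℂ V'))
    (hw : Even w) (hw' : Even w')
    (hm : finrank ℂ (Vp (w / 2)) = 1) (hm' : finrank ℂ (V'q (w' / 2)) = 1)
    (ε ε' : ℤ) (hε : ε = 1 ∨ ε = -1) (hε' : ε' = 1 ∨ ε' = -1)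
    (hmid : ∀ v ∈ Vp (w / 2), ρ v = (ε : ℂ) • v)
    (hmid' : ∀ v ∈ V'q (w' / 2), ρ' v = (ε' : ℂ) • v) :
    (finrank ℂ (LinearMap.ker (TensorProduct.map ρ ρ' - LinearMap.id)) : ℤ) -
      (finrank ℂ (LinearMap.ker (TensorProduct.map ρ ρ' + LinearMap.id)) : ℤ) =
    ε * ε' :=
  tensor_odd_odd_signature_general V V' Vp hV V'q hV' ρ hρ ρ' hρ' w w' hmap hmap' hw hw' hm hm' ε ε'
    hmid hmid'
end

section
/- Let d = d⁺ + d⁻ with 𝔭⁻ an index satisfying s₁ + ⋯ + s_{𝔭⁻} = d⁻, and let f⁻(x) be the determinant of the upper-right d⁻ × d⁻ submatrix of x ∈ M_d(F) (rows 1..d⁻, columns d⁺+1..d). Then f⁻(pxγ) = (∏_{i=1}^{𝔭⁻} det(pᵢᵢ)) · f⁻(x) · det(b) for all p in the lower parabolic P and γ = diag(a,b) ∈ GL(d⁺) × GL(d⁻); i.e., f⁻ has admissibility type {(1,…,1,0,…,0),(0,1)} with 𝔭⁻ ones. -/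
open Matrix Finset

/-- The block-diagonal embedding diag(a,b) of GL(d⁺) × GL(d⁻). -/
def blockDiagEmb {F : Type*} [Semiring F] {dp dm : ℕ}
    (a : Matrix (Fin dp) (Fin dp) F) (b : Matrix (Fin dm) (Fin dm) F) :
    Matrix (Fin (dp + dm)) (Fin (dp + dm)) F :=
  (Matrix.fromBlocks a 0 0 b).submatrix finSumFinEquiv.symm finSumFinEquiv.symm

/-- The upper-right d⁻ × d⁻ minor f⁻ of x ∈ M_d(F): rows 1..d⁻ and columns
d⁺+1..d, where d = d⁺ + d⁻. -/
def fMinus {F : Type*} [CommRing F] {dp dm : ℕ}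
    (x : Matrix (Fin (dp + dm)) (Fin (dp + dm)) F) : F :=
  (x.submatrix (fun i : Fin dm => Fin.castLE (Nat.le_add_left dm dp) i)
    (fun j : Fin dm => Fin.natAdd dp j)).det

section Aux

variable {F : Type*} [Field F] {m dp dm : ℕ}

/-- Indices whose block index is below `pM` are exactly the first `dm` indices. -/
lemma aux_key (s : Fin m → ℕ) (β : Fin (dp + dm) → Fin m)
    (hmono : Monotone β)
    (hcard : ∀ μ, (Finset.univ.filter fun i => β i = μ).card = s μ)
    (pM : ℕ) (hsum : ∑ μ ∈ Finset.univ.filter (fun μ : Fin m => (μ : ℕ) < pM), s μ = dm) :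
    ∀ i : Fin (dp + dm), (β i : ℕ) < pM ↔ (i : ℕ) < dm := by
  classical
  set S : Finset (Fin (dp + dm)) := univ.filter (fun i => (β i : ℕ) < pM) with hS
  have hScard : S.card = dm := by
    rw [Finset.card_eq_sum_card_fiberwise
      (f := β) (t := univ.filter (fun μ : Fin m => (μ : ℕ) < pM))
      (fun x hx => Finset.mem_filter.mpr ⟨Finset.mem_univ _, (Finset.mem_filter.mp hx).2⟩)]
    refine Eq.trans ?_ hsum
    refine Finset.sum_congr rfl fun μ hμ => ?_
    rw [← hcard μ]
    congr 1
    ext i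
    simp only [hS, Finset.mem_filter, Finset.mem_univ, true_and]
    exact ⟨fun h => h.2, fun h => ⟨h ▸ (Finset.mem_filter.mp hμ).2, h⟩⟩
  have hlower : ∀ i j : Fin (dp + dm), i ≤ j → j ∈ S → i ∈ S := by
    intro i j hij hj
    simp only [hS, Finset.mem_filter, Finset.mem_univ, true_and] at hj ⊢
    exact lt_of_le_of_lt (by exact_mod_cast hmono hij) hj
  intro i
  constructor
  · intro h
    by_contra hge
    push_neg at hge
    have hsub : Finset.Iic i ⊆ S := fun j hj =>
      hlower j i (Finset.mem_Iic.mp hj) (by simp [hS, h])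
    have := Finset.card_le_card hsub
    rw [Fin.card_Iic, hScard] at this
    omega
  · intro h
    by_contra hn
    have hiS : i ∉ S := by simp [hS, hn]
    have hsub : S ⊆ Finset.Iio i := by
      intro j hj
      rw [Finset.mem_Iio]
      by_contra hle
      exact hiS (hlower i j (le_of_not_gt hle) hj)
    have := Finset.card_le_card hsub
    rw [Fin.card_Iio, hScard] at this
    omega

/-- Left multiplication by the "lower block-triangular" `p` acts on the
upper-right minor through the upper-left `dm × dm` corner of `p`. -/
lemma aux_left (β : Fin (dp + dm) → Fin m) (pM : ℕ)
    (key : ∀ i : Fin (dp + dm), (β i : ℕ) < pM ↔ (i : ℕ) < dm)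
    (p : Matrix (Fin (dp + dm)) (Fin (dp + dm)) F)
    (hlow : ∀ i j, β i < β j → p i j = 0)
    (y : Matrix (Fin (dp + dm)) (Fin (dp + dm)) F) :
    (p * y).submatrix
      (fun i : Fin dm => Fin.castLE (Nat.le_add_left dm dp) i)
      (fun j : Fin dm => Fin.natAdd dp j) =
    (p.submatrix (fun i : Fin dm => Fin.castLE (Nat.le_add_left dm dp) i)
      (fun i : Fin dm => Fin.castLE (Nat.le_add_left dm dp) i)) *
    (y.submatrix (fun i : Fin dm => Fin.castLE (Nat.le_add_left dm dp) i)
      (fun j : Fin dm => Fin.natAdd dp j)) := by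
  ext i j
  simp only [submatrix_apply, mul_apply]
  rw [← Equiv.sum_comp (finCongr (Nat.add_comm dm dp))
    (fun k => p (Fin.castLE (Nat.le_add_left dm dp) i) k * y k (Fin.natAdd dp j))]
  rw [Fin.sum_univ_add]
  have h0 : ∀ a : Fin dp,
      p (Fin.castLE (Nat.le_add_left dm dp) i)
        (Fin.addNat a dm) = 0 := by
    intro a
    apply hlow
    have h1 : (β (Fin.castLE (Nat.le_add_left dm dp) i) : ℕ) < pM :=
      (key _).mpr (by simp [i.isLt])
    have h2 : ¬ ((β (Fin.addNat a dm) : ℕ) < pM) := by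
      rw [key]
      simp
    rw [Fin.lt_iff_val_lt_val]
    omega
  have h3 : ∀ k : Fin dm,
      finCongr (Nat.add_comm dm dp) (Fin.castAdd dp k) =
        Fin.castLE (Nat.le_add_left dm dp) k := by
    intro k; ext; simp
  simp only [h3]
  simp [h0]

/-- Right multiplication by `diag(A, B)` acts on the upper-right minor
through `B`. -/
lemma aux_right (B : Matrix (Fin dm) (Fin dm) F) (A : Matrix (Fin dp) (Fin dp) F)
    (y : Matrix (Fin (dp + dm)) (Fin (dp + dm)) F) :
    (y * blockDiagEmb A B).submatrix
      (fun i : Fin dm => Fin.castLE (Nat.le_add_left dm dp) i)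
      (fun j : Fin dm => Fin.natAdd dp j) =
    (y.submatrix (fun i : Fin dm => Fin.castLE (Nat.le_add_left dm dp) i)
      (fun j : Fin dm => Fin.natAdd dp j)) * B := by
  ext i j
  simp only [submatrix_apply, mul_apply]
  rw [← Equiv.sum_comp finSumFinEquiv
    (fun l => y (Fin.castLE (Nat.le_add_left dm dp) i) l * blockDiagEmb A B l (Fin.natAdd dp j))]
  rw [Fintype.sum_sum_type]
  have h0 : ∀ a : Fin dp,
      blockDiagEmb A B (Fin.castAdd dm a) (Fin.natAdd dp j) = 0 := by
    intro a
    rw [← finSumFinEquiv_apply_left (i := a), ← finSumFinEquiv_apply_right (i := j)]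
    simp [blockDiagEmb]
  have h1 : ∀ l : Fin dm,
      blockDiagEmb A B (Fin.natAdd dp l) (Fin.natAdd dp j) = B l j := by
    intro l
    rw [← finSumFinEquiv_apply_right (i := l), ← finSumFinEquiv_apply_right (i := j)]
    simp [blockDiagEmb]
  simp [h0, h1]

/-- The determinant of the upper-left corner of `p` is the product of the
determinants of the diagonal square blocks with index below `pM`. -/
lemma aux_det (β : Fin (dp + dm) → Fin m) (pM : ℕ)
    (key : ∀ i : Fin (dp + dm), (β i : ℕ) < pM ↔ (i : ℕ) < dm)
    (p : Matrix (Fin (dp + dm)) (Fin (dp + dm)) F)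
    (hlow : ∀ i j, β i < β j → p i j = 0) :
    (p.submatrix (fun i : Fin dm => Fin.castLE (Nat.le_add_left dm dp) i)
      (fun i : Fin dm => Fin.castLE (Nat.le_add_left dm dp) i)).det =
    ∏ μ ∈ Finset.univ.filter (fun μ : Fin m => (μ : ℕ) < pM),
        (p.toSquareBlock β μ).det := by
  classical
  set r : Fin dm → Fin (dp + dm) := fun i => Fin.castLE (Nat.le_add_left dm dp) i with hr
  set β' : Fin dm → Fin m := fun i => β (r i) with hβ'
  set P0 : Matrix (Fin dm) (Fin dm) F := p.submatrix r r with hP0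
  have hri : ∀ (i : Fin (dp + dm)) (h : (i : ℕ) < dm), r ⟨(i : ℕ), h⟩ = i :=
    fun i h => Fin.ext rfl
  have htri : (P0ᵀ).BlockTriangular β' := by
    intro i j h
    exact hlow (r j) (r i) h
  rw [← Matrix.det_transpose P0, htri.det]
  have himg : (univ.image β') ⊆ univ.filter (fun μ : Fin m => (μ : ℕ) < pM) := by
    intro μ hμ
    obtain ⟨i, _, rfl⟩ := Finset.mem_image.mp hμ
    simp only [Finset.mem_filter, Finset.mem_univ, true_and]
    exact (key (r i)).mpr (by simp [hr, i.isLt])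
  rw [Finset.prod_subset himg]
  · refine Finset.prod_congr rfl fun μ hμ => ?_
    by_cases hμ' : μ ∈ univ.image β'
    · have hre : ∀ i : Fin (dp + dm), β i = μ → (i : ℕ) < dm := by
        intro i hi
        exact (key i).mp (by
          simp only [Finset.mem_filter, Finset.mem_univ, true_and] at hμ
          omega)
      let e : {i : Fin dm // β' i = μ} ≃ {i : Fin (dp + dm) // β i = μ} :=
        { toFun := fun i => ⟨r i.1, i.2⟩
          invFun := fun i => ⟨⟨(i.1 : ℕ), hre i.1 i.2⟩, by
            simp only [hβ', hri]; exact i.2⟩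
          left_inv := fun i => by ext; simp [hr]
          right_inv := fun i => by ext; simp [hr] }
      have : p.toSquareBlock β μ = (((P0ᵀ).toSquareBlock β' μ).submatrix e.symm e.symm)ᵀ := by
        ext i j
        simp [Matrix.toSquareBlock_def, hP0, e, hr]
      rw [this, Matrix.det_transpose, Matrix.det_submatrix_equiv_self]
    · haveI : IsEmpty {i : Fin (dp + dm) // β i = μ} := by
        constructor
        rintro ⟨i, hi⟩
        have hilt : (i : ℕ) < dm := (key i).mp (by
          simp only [Finset.mem_filter, Finset.mem_univ, true_and] at hμ
          omega)
        exact hμ' (Finset.mem_image.mpr ⟨⟨(i : ℕ), hilt⟩, Finset.mem_univ _, by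
          simp only [hβ', hri]; exact hi⟩)
      haveI : IsEmpty {i : Fin dm // β' i = μ} := by
        constructor
        rintro ⟨i, hi⟩
        exact hμ' (Finset.mem_image.mpr ⟨i, Finset.mem_univ _, hi⟩)
      rw [Matrix.det_isEmpty, Matrix.det_isEmpty]
  · intro μ hμ hμ'
    haveI : IsEmpty {i : Fin dm // β' i = μ} := by
      constructor
      rintro ⟨i, hi⟩
      exact hμ' (Finset.mem_image.mpr ⟨i, Finset.mem_univ _, hi⟩)
    exact Matrix.det_isEmpty

end Aux

/-- The upper-right minor f⁻ has admissibility type {(1,…,1,0,…,0),(0,1)} with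
𝔭⁻ ones, where s₁ + ⋯ + s_{𝔭⁻} = d⁻:
f⁻(p·x·diag(A,B)) = (∏_{μ ≤ 𝔭⁻} det p_{μμ}) · f⁻(x) · det B. -/
theorem fMinus_admissibleType
    {F : Type*} [Field F] {m dp dm : ℕ}
    (s : Fin m → ℕ) (β : Fin (dp + dm) → Fin m)
    (hmono : Monotone β)
    (hcard : ∀ μ, (Finset.univ.filter fun i => β i = μ).card = s μ)
    (pM : ℕ) (hsum : ∑ μ ∈ Finset.univ.filter (fun μ : Fin m => (μ : ℕ) < pM), s μ = dm)
    (p : Matrix (Fin (dp + dm)) (Fin (dp + dm)) F) (hp : IsUnit p.det)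
    (hlow : ∀ i j, β i < β j → p i j = 0)
    (x : Matrix (Fin (dp + dm)) (Fin (dp + dm)) F)
    (A : Matrix (Fin dp) (Fin dp) F) (hA : IsUnit A.det)
    (B : Matrix (Fin dm) (Fin dm) F) (hB : IsUnit B.det) :
    fMinus (p * x * blockDiagEmb A B) =
      (∏ μ ∈ Finset.univ.filter (fun μ : Fin m => (μ : ℕ) < pM),
        (p.toSquareBlock β μ).det) * fMinus x * B.det := by
  have key := aux_key s β hmono hcard pM hsum
  have h1 : p * x * blockDiagEmb A B = p * (x * blockDiagEmb A B) := mul_assoc _ _ _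
  unfold fMinus
  rw [h1, aux_left β pM key p hlow, aux_right B A x, Matrix.det_mul, Matrix.det_mul,
    aux_det β pM key p hlow]
  ring
end

section
/- With the notation of the previous statement, define the dual counts a*_s^{±} = #{r : 1 ≤ r ≤ d, a_r^{±} ≥ s} for 1 ≤ s ≤ d′. If q⁺ = q⁻ + 1, u_{q⁺} = 1, and (r₀, s₀) is the unique pair with i_{r₀} + j_{s₀} = k_{q⁺}, then a*_{s₀}⁺ − a*_{s₀}⁻ = 1 and a*_s⁺ = a*_s⁻ for all s ≠ s₀. -/
/-!
Passing from `k q⁻` to `k q⁺` adds exactly one pair to `{(r, s) : i r + j s ≥ κ}`: since `k` is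
strictly decreasing and covers every sum, no sum lies strictly between `k q⁺` and `k q⁻`, and only
`(r₀, s₀)` attains `k q⁺`. Hence the row count `a_{r₀}` grows by one and all other rows are
unchanged. As `j` is strictly decreasing, `a_{r₀}⁺ = #{s : j s ≥ j s₀} = s₀ + 1`, so in the
conjugate partition only the column `s₀` gains a box.
-/

open Finset

/-- a_r^κ = #{s : i_r + j_s ≥ κ}. -/
def aCount {d d' : ℕ} (i : Fin d → ℤ) (j : Fin d' → ℤ) (κ : ℤ) (r : Fin d) : ℕ :=
  (Finset.univ.filter fun s : Fin d' => κ ≤ i r + j s).card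

/-- The dual count a*_s^κ = #{r : a_r^κ ≥ s} (s in 1-based indexing, so the
entry of `Fin d'` corresponds to the value (s : ℕ) + 1). -/
def aStar {d d' : ℕ} (i : Fin d → ℤ) (j : Fin d' → ℤ) (κ : ℤ) (s : Fin d') : ℕ :=
  (Finset.univ.filter fun r : Fin d => (s : ℕ) + 1 ≤ aCount i j κ r).card

theorem card_filter_le_eq_add_ite {α : Type*} [Fintype α] [DecidableEq α] {a b : α → ℕ} {x : α}
    (hx : a x = b x + 1) (hne : ∀ y ≠ x, a y = b y) (m : ℕ) :
    #{y | m ≤ a y} = #{y | m ≤ b y} + if m = a x then 1 else 0 := by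
  simp only [card_filter]
  rw [Fintype.sum_eq_add_sum_compl x,
    Fintype.sum_eq_add_sum_compl x (fun y => if m ≤ b y then 1 else 0)]
  have hrest : ∑ y ∈ {x}ᶜ, (if m ≤ a y then 1 else 0) = ∑ y ∈ {x}ᶜ, if m ≤ b y then 1 else 0 :=
    sum_congr rfl fun y hy => by rw [hne y (by simpa using hy)]
  rw [hrest, hx]
  split_ifs <;> omega

theorem StrictAnti.eq_or_le_of_covBy {α β : Type*} [LinearOrder α] [LinearOrder β] {k : α → β}
    (hk : StrictAnti k) {p q t : α} (hqp : q ⋖ p) (h : k p ≤ k t) : k t = k p ∨ k q ≤ k t := by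
  rcases (hk.le_iff_ge.mp h).eq_or_lt with rfl | htp
  · exact Or.inl rfl
  · exact Or.inr (hk.antitone (hqp.le_of_lt htp))

section Counts

variable {d d' : ℕ} {i : Fin d → ℤ} {j : Fin d' → ℤ}

theorem aCount_eq_add_card_filter_eq {κ κ' : ℤ} (hlt : κ < κ') {r : Fin d}
    (hgap : ∀ s, κ ≤ i r + j s → i r + j s = κ ∨ κ' ≤ i r + j s) :
    aCount i j κ r = aCount i j κ' r + #{s | i r + j s = κ} := by
  unfold aCount
  rw [← card_union_of_disjoint]
  · congr 1
    ext s
    simp only [mem_filter, mem_univ, true_and, mem_union]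
    constructor
    · intro h
      rcases hgap s h with h' | h' <;> simp [h']
    · rintro (h | h) <;> omega
  · exact disjoint_filter.mpr fun s _ h h' => by omega

theorem aCount_eq_of_add_eq (hj : StrictAnti j) {κ : ℤ} {r : Fin d} {s : Fin d'}
    (h : i r + j s = κ) : aCount i j κ r = (s : ℕ) + 1 := by
  have hfilter : ({t | κ ≤ i r + j t} : Finset (Fin d')) = Iic s := by
    ext t
    simp only [mem_filter, mem_univ, true_and, mem_Iic, ← h, add_le_add_iff_left, hj.le_iff_ge]
  rw [aCount, hfilter, Fin.card_Iic]

theorem aCount_eq_add_ite {κ κ' : ℤ} (hlt : κ < κ')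
    (hgap : ∀ r s, κ ≤ i r + j s → i r + j s = κ ∨ κ' ≤ i r + j s) {r₀ : Fin d} {s₀ : Fin d'}
    (huniq : ∀ r s, i r + j s = κ ↔ r = r₀ ∧ s = s₀) (r : Fin d) :
    aCount i j κ r = aCount i j κ' r + if r = r₀ then 1 else 0 := by
  rw [aCount_eq_add_card_filter_eq hlt (hgap r)]
  split_ifs with hr
  · have hfiber : ({s | i r + j s = κ} : Finset (Fin d')) = {s₀} := by
      ext s
      simp [huniq, hr]
    rw [hfiber, card_singleton]
  · rw [card_eq_zero.mpr (filter_eq_empty_iff.mpr fun s _ h => hr ((huniq r s).mp h).1)]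

end Counts

theorem unique_column_jump_dual_general
    {d d' mlen : ℕ}
    (i : Fin d → ℤ) (j : Fin d' → ℤ) (hj : StrictAnti j)
    (k : Fin mlen → ℤ) (hk : StrictAnti k)
    (hcover : ∀ r s, ∃ t, i r + j s = k t)
    (qP qM : Fin mlen) (hq : (qP : ℕ) = (qM : ℕ) + 1)
    (hu : (Finset.univ.filter fun p : Fin d × Fin d' => i p.1 + j p.2 = k qP).card = 1)
    (r₀ : Fin d) (s₀ : Fin d') (hr₀s₀ : i r₀ + j s₀ = k qP) :
    aStar i j (k qP) s₀ = aStar i j (k qM) s₀ + 1 ∧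
    ∀ s ≠ s₀, aStar i j (k qP) s = aStar i j (k qM) s := by
  have hcov : qM ⋖ qP := Fin.covBy_iff.mpr (by rw [hq]; exact Order.covBy_add_one _)
  have huniq : ∀ r s, i r + j s = k qP ↔ r = r₀ ∧ s = s₀ := fun r s =>
    ⟨fun h => Prod.ext_iff.mp
        (card_le_one.mp hu.le (r, s) (by simp [h]) (r₀, s₀) (by simp [hr₀s₀])),
      by rintro ⟨rfl, rfl⟩; exact hr₀s₀⟩
  have hrow := aCount_eq_add_ite (hk hcov.lt) (fun r s h => by
    obtain ⟨t, ht⟩ := hcover r s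
    rw [ht] at h ⊢
    exact hk.eq_or_le_of_covBy hcov h) huniq
  have hcol (s : Fin d') : aStar i j (k qP) s = aStar i j (k qM) s + if s = s₀ then 1 else 0 := by
    rw [aStar, aStar, card_filter_le_eq_add_ite (x := r₀) (by simpa using hrow r₀)
      (fun r hr => by simpa [hr] using hrow r), aCount_eq_of_add_eq hj hr₀s₀]
    simp [Fin.val_inj]
  exact ⟨by simpa using hcol s₀, fun s hs => by simpa [hs] using hcol s⟩

/-- Dual version of Case 1 of §5.3: if q⁺ = q⁻ + 1, u_{q⁺} = 1 and (r₀,s₀) is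
the unique pair with i_{r₀} + j_{s₀} = k_{q⁺}, then a*_{s₀}⁺ = a*_{s₀}⁻ + 1 and
a*_s⁺ = a*_s⁻ for all s ≠ s₀. -/
theorem unique_column_jump_dual
    {d d' mlen : ℕ} (hd : Odd d) (hd' : Odd d')
    (i : Fin d → ℤ) (j : Fin d' → ℤ) (hi : StrictAnti i) (hj : StrictAnti j)
    (k : Fin mlen → ℤ) (hk : StrictAnti k)
    (hcover : ∀ r s, ∃ t, i r + j s = k t)
    (qP qM : Fin mlen) (hq : (qP : ℕ) = (qM : ℕ) + 1)
    (hu : (Finset.univ.filter fun p : Fin d × Fin d' => i p.1 + j p.2 = k qP).card = 1)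
    (r₀ : Fin d) (s₀ : Fin d') (hr₀s₀ : i r₀ + j s₀ = k qP) :
    aStar i j (k qP) s₀ = aStar i j (k qM) s₀ + 1 ∧
    ∀ s ≠ s₀, aStar i j (k qP) s = aStar i j (k qM) s :=
  unique_column_jump_dual_general i j hj k hk hcover qP qM hq hu r₀ s₀ hr₀s₀
end

section
/- Let M and M′ be modeled as follows: X ∈ GL_{d}(ℂ) and Y ∈ GL_{d′}(ℂ) are period matrices, d even, d′ odd, with d⁺(M) = d⁻(M) = d/2 and d⁺(M′) = d⁻(M′) + ε for a sign ε. Suppose h⁺ and h⁻ are polynomial functions in (x,y) that factor as h^{±}(x,y) = φ^{±}(x)ψ^{±}(y), where for fixed y each h^{±}(·,y) has admissibility type {(a^{±}_μ), (d^{±}(M′), d^{∓}(M′))} and the exponent sequences satisfy a⁺_μ = a⁻_μ for all μ. If ε = 1, then the polynomials φ⁺(x)·f⁻(x) and φ⁻(x)·f⁺(x) have the same admissibility type, where f^{±} are the upper-left/upper-right d/2 × d/2 minors; consequently (by uniqueness of polynomials of a given admissibility type) φ⁺ f⁻ = c · φ⁻ f⁺ for some nonzero rational constant c. -/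
/-!
For `p` in the parabolic, the upper-left and upper-right `n × n` blocks of `p * x * diag(A, B)`
are `p₁₁ x₁₁ A` and `p₁₁ x₁₂ B`, and `det p₁₁` is the product of the diagonal blocks `det p_μ`
with `μ < pp`; this gives the two admissibility types.

Proportionality is the uniqueness of a polynomial of given type. With `w₀` the exchange matrix,
the point `x₀ = [[1, 1], [w₀, 0]]` has a Zariski-dense orbit under lower-triangular matrices on
the left and `GL(n) × GL(n)` on the right: `x` lies in it as soon as `x₁₁`, `x₁₂` are invertible
and `(x₂₁ x₁₁⁻¹ - x₂₂ x₁₂⁻¹) w₀` has an LU decomposition, and these conditions are the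
nonvanishing of one nonzero polynomial once the inverses are replaced by adjugates. Two
polynomials of the same type transform by the same character along the orbit, so
`g(x₀) f - f(x₀) g` vanishes on it, hence everywhere since `F` is infinite.
-/

open Matrix Finset

/-- Evaluation of a polynomial function on d×d matrices. -/
noncomputable def matEval {F : Type*} [CommSemiring F] {n : ℕ}
    (f : MvPolynomial (Fin n × Fin n) F) (M : Matrix (Fin n) (Fin n) F) : F :=
  MvPolynomial.eval (fun q => M q.1 q.2) f

/-- Admissibility type {(a₁,…,a_m),(k⁺,k⁻)} of a polynomial on M_d(F). -/
def IsAdmissibleType {F : Type*} [Field F] {m dp dm : ℕ}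
    (β : Fin (dp + dm) → Fin m)
    (f : MvPolynomial (Fin (dp + dm) × Fin (dp + dm)) F)
    (a : Fin m → ℤ) (kP kM : ℤ) : Prop :=
  ∀ p : Matrix (Fin (dp + dm)) (Fin (dp + dm)) F, IsUnit p.det →
    (∀ i j, β i < β j → p i j = 0) →
    ∀ x : Matrix (Fin (dp + dm)) (Fin (dp + dm)) F,
      ∀ A : Matrix (Fin dp) (Fin dp) F, IsUnit A.det →
        ∀ B : Matrix (Fin dm) (Fin dm) F, IsUnit B.det →
          matEval f (p * x * blockDiagEmb A B) =
            (∏ μ : Fin m, (p.toSquareBlock β μ).det ^ a μ) *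
              matEval f x * A.det ^ kP * B.det ^ kM

/-- The upper-left d⁺ × d⁺ minor, as a polynomial in the matrix entries. -/
noncomputable def fPlusPoly (F : Type*) [CommRing F] (dp dm : ℕ) :
    MvPolynomial (Fin (dp + dm) × Fin (dp + dm)) F :=
  (Matrix.of fun i j : Fin dp =>
    MvPolynomial.X (Fin.castAdd dm i, Fin.castAdd dm j)).det

/-- The upper-right d⁻ × d⁻ minor, as a polynomial in the matrix entries. -/
noncomputable def fMinusPoly (F : Type*) [CommRing F] (dp dm : ℕ) :
    MvPolynomial (Fin (dp + dm) × Fin (dp + dm)) F :=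
  (Matrix.of fun i j : Fin dm =>
    MvPolynomial.X (Fin.castLE (Nat.le_add_left dm dp) i, Fin.natAdd dp j)).det

section Blocks

variable {R : Type*} [CommRing R] {dp dm : ℕ}

abbrev blockEquiv (R : Type*) [CommRing R] (dp dm : ℕ) :
    Matrix (Fin dp ⊕ Fin dm) (Fin dp ⊕ Fin dm) R ≃ₐ[R] Matrix (Fin (dp + dm)) (Fin (dp + dm)) R :=
  reindexAlgEquiv R R finSumFinEquiv

theorem blockDiagEmb_eq_blockEquiv (A : Matrix (Fin dp) (Fin dp) R)
    (B : Matrix (Fin dm) (Fin dm) R) : blockDiagEmb A B = blockEquiv R dp dm (fromBlocks A 0 0 B) :=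
  rfl

theorem matEval_mul {n : ℕ} (f g : MvPolynomial (Fin n × Fin n) R) (x : Matrix (Fin n) (Fin n) R) :
    matEval (f * g) x = matEval f x * matEval g x :=
  map_mul _ _ _

theorem matEval_fPlusPoly (x : Matrix (Fin (dp + dm)) (Fin (dp + dm)) R) :
    matEval (fPlusPoly R dp dm) x = ((blockEquiv R dp dm).symm x).toBlocks₁₁.det := by
  rw [matEval, fPlusPoly, RingHom.map_det]
  congr 1
  ext i j
  exact MvPolynomial.eval_X _

theorem matEval_fMinusPoly {n : ℕ} (x : Matrix (Fin (n + n)) (Fin (n + n)) R) :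
    matEval (fMinusPoly R n n) x = ((blockEquiv R n n).symm x).toBlocks₁₂.det := by
  rw [matEval, fMinusPoly, RingHom.map_det]
  congr 1
  ext i j
  exact MvPolynomial.eval_X _

theorem fPlusPoly_ne_zero [Nontrivial R] : fPlusPoly R dp dm ≠ 0 := fun h ↦ by
  have h1 := matEval_fPlusPoly (1 : Matrix (Fin (dp + dm)) (Fin (dp + dm)) R)
  rw [h, map_one, ← fromBlocks_one, toBlocks_fromBlocks₁₁] at h1
  simp [matEval] at h1

theorem isLowerTriangular_blockEquiv_fromBlocks {A : Matrix (Fin dp) (Fin dp) R}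
    {D : Matrix (Fin dm) (Fin dm) R} (C : Matrix (Fin dm) (Fin dp) R) (hA : A.IsLowerTriangular)
    (hD : D.IsLowerTriangular) : (blockEquiv R dp dm (fromBlocks A 0 C D)).IsLowerTriangular := by
  rw [IsLowerTriangular, coe_reindexAlgEquiv, blockTriangular_reindex_iff]
  rintro (i | i) (j | j) h
  · exact hA (by simpa [(Fin.strictMono_castAdd dm).lt_iff_lt] using h)
  · rfl
  · simp only [Function.comp_apply, finSumFinEquiv_apply_left, finSumFinEquiv_apply_right,
      OrderDual.toDual_lt_toDual, Fin.lt_def, Fin.val_natAdd, Fin.val_castAdd] at h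
    omega
  · exact hD (by simpa using h)

theorem isUpperTriangular_blockEquiv_fromBlocks {A : Matrix (Fin dp) (Fin dp) R}
    {D : Matrix (Fin dm) (Fin dm) R} (B : Matrix (Fin dp) (Fin dm) R) (hA : A.IsUpperTriangular)
    (hD : D.IsUpperTriangular) : (blockEquiv R dp dm (fromBlocks A B 0 D)).IsUpperTriangular := by
  rw [IsUpperTriangular, coe_reindexAlgEquiv, blockTriangular_reindex_iff]
  rintro (i | i) (j | j) h
  · exact hA (by simpa [(Fin.strictMono_castAdd dm).lt_iff_lt] using h)
  · simp only [Function.comp_apply, id_eq, finSumFinEquiv_apply_left, finSumFinEquiv_apply_right,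
      Fin.lt_def, Fin.val_natAdd, Fin.val_castAdd] at h
    omega
  · rfl
  · exact hD (by simpa using h)

end Blocks

theorem Fin.val_lt_card_iff_of_monotone {N m : ℕ} {β : Fin N → Fin m} (hβ : Monotone β) (pp : ℕ)
    (i : Fin N) : (β i : ℕ) < pp ↔ (i : ℕ) < #{j | (β j : ℕ) < pp} := by
  constructor
  · intro hi
    have hsub : Iic i ⊆ ({j | (β j : ℕ) < pp} : Finset (Fin N)) := fun j hj ↦ by
      simp only [mem_filter, mem_univ, true_and]
      exact lt_of_le_of_lt (hβ (mem_Iic.mp hj)) hi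
    simpa using card_le_card hsub
  · intro hi
    by_contra hi'
    have hsub : ({j | (β j : ℕ) < pp} : Finset (Fin N)) ⊆ Iio i := fun j hj ↦ by
      simp only [mem_filter, mem_univ, true_and] at hj
      exact mem_Iio.mpr (lt_of_not_ge fun hij ↦ hi' (lt_of_le_of_lt (hβ hij) hj))
    have := card_le_card hsub
    simp only [Fin.card_Iio] at this
    omega

section Parabolic

variable {R : Type*} [CommRing R] {m dp dm : ℕ} {β : Fin (dp + dm) → Fin m} {pp : ℕ}
  {p : Matrix (Fin (dp + dm)) (Fin (dp + dm)) R}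

theorem toBlocks₁₂_eq_zero_of_parabolic (hβ : ∀ i, (β i : ℕ) < pp ↔ (i : ℕ) < dp)
    (hp : ∀ i j, β i < β j → p i j = 0) : ((blockEquiv R dp dm).symm p).toBlocks₁₂ = 0 := by
  ext i j
  refine hp _ _ (Fin.lt_def.mpr ?_)
  have hi := (hβ (Fin.castAdd dm i)).mpr (by simp)
  have hj := (hβ (Fin.natAdd dp j)).not.mpr (by simp)
  change (β (Fin.castAdd dm i) : ℕ) < β (Fin.natAdd dp j)
  omega

theorem det_toBlocks₁₁_of_parabolic (hβ : ∀ i, (β i : ℕ) < pp ↔ (i : ℕ) < dp)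
    (hp : ∀ i j, β i < β j → p i j = 0) :
    ((blockEquiv R dp dm).symm p).toBlocks₁₁.det =
      ∏ μ ∈ univ.filter fun μ : Fin m ↦ (μ : ℕ) < pp, (p.toSquareBlock β μ).det := by
  set P := ((blockEquiv R dp dm).symm p).toBlocks₁₁
  have hP : P.BlockTriangular (OrderDual.toDual ∘ β ∘ Fin.castAdd dm) := fun i j h ↦ hp _ _ h
  rw [hP.det_fintype, prod_filter]
  refine (Fintype.prod_equiv OrderDual.toDual _ _ fun μ ↦ ?_).symm
  split_ifs with hμ
  · have hlt (i : {i // β i = μ}) : (i : ℕ) < dp := (hβ i).mp (by rw [i.2]; exact hμ)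
    let e : {a // (OrderDual.toDual ∘ β ∘ Fin.castAdd dm) a = OrderDual.toDual μ} ≃
        {i // β i = μ} :=
      { toFun i := ⟨Fin.castAdd dm i, i.2⟩
        invFun i := ⟨⟨i, hlt i⟩, i.2⟩
        left_inv _ := rfl
        right_inv _ := rfl }
    exact (det_submatrix_equiv_self e (p.toSquareBlock β μ)).symm
  · have : IsEmpty {a // (OrderDual.toDual ∘ β ∘ Fin.castAdd dm) a = OrderDual.toDual μ} :=
      ⟨fun i ↦ hμ ((show β (Fin.castAdd dm i) = μ from i.2) ▸ (hβ _).mpr (by simp))⟩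
    exact det_isEmpty.symm

theorem topBlocks_mul_mul_fromBlocks {l o : Type*} [Fintype l] [Fintype o]
    {P : Matrix (l ⊕ o) (l ⊕ o) R} (hP : P.toBlocks₁₂ = 0) (X : Matrix (l ⊕ o) (l ⊕ o) R)
    (A : Matrix l l R) (B : Matrix o o R) :
    (P * X * fromBlocks A 0 0 B).toBlocks₁₁ = P.toBlocks₁₁ * X.toBlocks₁₁ * A ∧
      (P * X * fromBlocks A 0 0 B).toBlocks₁₂ = P.toBlocks₁₁ * X.toBlocks₁₂ * B := by
  rw [← fromBlocks_toBlocks P, ← fromBlocks_toBlocks X, hP]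
  simp [fromBlocks_multiply, Matrix.mul_assoc]

theorem topBlocks_parabolic_mul_mul_blockDiagEmb (hβ : ∀ i, (β i : ℕ) < pp ↔ (i : ℕ) < dp)
    (hp : ∀ i j, β i < β j → p i j = 0) (x : Matrix (Fin (dp + dm)) (Fin (dp + dm)) R)
    (A : Matrix (Fin dp) (Fin dp) R) (B : Matrix (Fin dm) (Fin dm) R) :
    let σ := (blockEquiv R dp dm).symm
    (σ (p * x * blockDiagEmb A B)).toBlocks₁₁ = (σ p).toBlocks₁₁ * (σ x).toBlocks₁₁ * A ∧
      (σ (p * x * blockDiagEmb A B)).toBlocks₁₂ = (σ p).toBlocks₁₁ * (σ x).toBlocks₁₂ * B := by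
  intro σ
  rw [map_mul, map_mul, blockDiagEmb_eq_blockEquiv, AlgEquiv.symm_apply_apply]
  exact topBlocks_mul_mul_fromBlocks (toBlocks₁₂_eq_zero_of_parabolic hβ hp) _ A B

end Parabolic

section Products

variable {F : Type*} [Field F] {m dp dm : ℕ} {β : Fin (dp + dm) → Fin m} {pp : ℕ}
  {p : Matrix (Fin (dp + dm)) (Fin (dp + dm)) F}

theorem det_toSquareBlock_ne_zero (hp : ∀ i j, β i < β j → p i j = 0) (hdet : IsUnit p.det)
    (μ : Fin m) : (p.toSquareBlock β μ).det ≠ 0 := by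
  have hP : p.BlockTriangular (OrderDual.toDual ∘ β) := fun i j h ↦ hp i j h
  have h := hdet.ne_zero
  rw [hP.det_fintype] at h
  exact prod_ne_zero_iff.mp h (OrderDual.toDual μ) (mem_univ _)

theorem prod_det_toSquareBlock_zpow_add_ite (hβ : ∀ i, (β i : ℕ) < pp ↔ (i : ℕ) < dp)
    (hp : ∀ i j, β i < β j → p i j = 0) (hdet : IsUnit p.det) (a : Fin m → ℤ) :
    ∏ μ, (p.toSquareBlock β μ).det ^ (a μ + if (μ : ℕ) < pp then 1 else 0) =
      (∏ μ, (p.toSquareBlock β μ).det ^ a μ) * ((blockEquiv F dp dm).symm p).toBlocks₁₁.det := by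
  have h (μ : Fin m) : (p.toSquareBlock β μ).det ^ (a μ + if (μ : ℕ) < pp then 1 else 0) =
      (p.toSquareBlock β μ).det ^ a μ * if (μ : ℕ) < pp then (p.toSquareBlock β μ).det else 1 := by
    rw [zpow_add₀ (det_toSquareBlock_ne_zero hp hdet μ)]
    split_ifs <;> simp
  rw [Fintype.prod_congr _ _ h, prod_mul_distrib, det_toBlocks₁₁_of_parabolic hβ hp, prod_filter]

variable {a : Fin m → ℤ} {kP kM : ℤ}

theorem IsAdmissibleType.mul_fPlusPoly (hβ : ∀ i, (β i : ℕ) < pp ↔ (i : ℕ) < dp)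
    {f : MvPolynomial (Fin (dp + dm) × Fin (dp + dm)) F} (hf : IsAdmissibleType β f a kP kM) :
    IsAdmissibleType β (f * fPlusPoly F dp dm) (fun μ ↦ a μ + if (μ : ℕ) < pp then 1 else 0)
      (kP + 1) kM := by
  intro p hdet hp x A hA B hB
  rw [matEval_mul, matEval_mul, hf p hdet hp x A hA B hB, matEval_fPlusPoly, matEval_fPlusPoly,
    (topBlocks_parabolic_mul_mul_blockDiagEmb hβ hp x A B).1, det_mul, det_mul,
    prod_det_toSquareBlock_zpow_add_ite hβ hp hdet, zpow_add_one₀ hA.ne_zero]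
  ring

theorem IsAdmissibleType.mul_fMinusPoly {n : ℕ} {β : Fin (n + n) → Fin m}
    (hβ : ∀ i, (β i : ℕ) < pp ↔ (i : ℕ) < n) {f : MvPolynomial (Fin (n + n) × Fin (n + n)) F}
    (hf : IsAdmissibleType β f a kP kM) :
    IsAdmissibleType β (f * fMinusPoly F n n) (fun μ ↦ a μ + if (μ : ℕ) < pp then 1 else 0)
      kP (kM + 1) := by
  intro p hdet hp x A hA B hB
  rw [matEval_mul, matEval_mul, hf p hdet hp x A hA B hB, matEval_fMinusPoly, matEval_fMinusPoly,
    (topBlocks_parabolic_mul_mul_blockDiagEmb hβ hp x A B).2, det_mul, det_mul,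
    prod_det_toSquareBlock_zpow_add_ite hβ hp hdet, zpow_add_one₀ hB.ne_zero]
  ring

end Products

section Uniqueness

variable {F : Type*} [Field F] {m dp dm : ℕ} {β : Fin (dp + dm) → Fin m}

-- Lower-triangular matrices lie in the parabolic of every monotone `β`, so this orbit sits
-- inside the orbit of `x₀` under the group that `IsAdmissibleType` refers to.
def lowerOrbit (x₀ : Matrix (Fin (dp + dm)) (Fin (dp + dm)) F) :
    Set (Matrix (Fin (dp + dm)) (Fin (dp + dm)) F) :=
  {x | ∃ (p : Matrix (Fin (dp + dm)) (Fin (dp + dm)) F) (A : Matrix (Fin dp) (Fin dp) F)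
    (B : Matrix (Fin dm) (Fin dm) F), p.IsLowerTriangular ∧ IsUnit p.det ∧ IsUnit A.det ∧
      IsUnit B.det ∧ x = p * x₀ * blockDiagEmb A B}

theorem exists_matEval_eq_mul_of_mem_lowerOrbit (hβ : Monotone β) (a : Fin m → ℤ) (kP kM : ℤ)
    {x₀ x : Matrix (Fin (dp + dm)) (Fin (dp + dm)) F} (hx : x ∈ lowerOrbit x₀) :
    ∃ c : F, ∀ f, IsAdmissibleType β f a kP kM → matEval f x = c * matEval f x₀ := by
  obtain ⟨p, A, B, hp, hdet, hA, hB, rfl⟩ := hx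
  have hpβ (i j) (h : β i < β j) : p i j = 0 :=
    hp (show i < j from lt_of_not_ge fun hji ↦ (hβ hji).not_gt h)
  exact ⟨(∏ μ, (p.toSquareBlock β μ).det ^ a μ) * A.det ^ kP * B.det ^ kM,
    fun f hf ↦ (hf p hdet hpβ x₀ A hA B hB).trans (by ring)⟩

theorem eq_zero_of_matEval_eq_zero_of_matEval_ne_zero [Infinite F] {N : ℕ}
    {E f : MvPolynomial (Fin N × Fin N) F} (hE : E ≠ 0)
    (h : ∀ x, matEval E x ≠ 0 → matEval f x = 0) : f = 0 := by
  have hfE : f * E = 0 := MvPolynomial.funext fun v ↦ by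
    change matEval (f * E) (Matrix.of fun i j ↦ v (i, j)) = 0
    by_cases hv : matEval E (Matrix.of fun i j ↦ v (i, j)) = 0
    · rw [matEval_mul, hv, mul_zero]
    · rw [matEval_mul, h _ hv, zero_mul]
  exact (mul_eq_zero.mp hfE).resolve_right hE

variable [Infinite F] {E : MvPolynomial (Fin (dp + dm) × Fin (dp + dm)) F}
  {x₀ : Matrix (Fin (dp + dm)) (Fin (dp + dm)) F}
  {f g : MvPolynomial (Fin (dp + dm) × Fin (dp + dm)) F} {a : Fin m → ℤ} {kP kM : ℤ}

theorem IsAdmissibleType.matEval_ne_zero (hβ : Monotone β) (hE : E ≠ 0)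
    (horbit : ∀ x, matEval E x ≠ 0 → x ∈ lowerOrbit x₀) (hf : IsAdmissibleType β f a kP kM)
    (hf0 : f ≠ 0) : matEval f x₀ ≠ 0 := fun h ↦
  hf0 <| eq_zero_of_matEval_eq_zero_of_matEval_ne_zero hE fun x hx ↦ by
    obtain ⟨c, hc⟩ := exists_matEval_eq_mul_of_mem_lowerOrbit hβ a kP kM (horbit x hx)
    rw [hc f hf, h, mul_zero]

theorem IsAdmissibleType.smul_eq_smul (hβ : Monotone β) (hE : E ≠ 0)
    (horbit : ∀ x, matEval E x ≠ 0 → x ∈ lowerOrbit x₀) (hf : IsAdmissibleType β f a kP kM)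
    (hg : IsAdmissibleType β g a kP kM) : matEval g x₀ • f = matEval f x₀ • g :=
  sub_eq_zero.mp <| eq_zero_of_matEval_eq_zero_of_matEval_ne_zero hE fun x hx ↦ by
    obtain ⟨c, hc⟩ := exists_matEval_eq_mul_of_mem_lowerOrbit hβ a kP kM (horbit x hx)
    simp only [matEval, map_sub, MvPolynomial.smul_eval] at hc ⊢
    rw [hc f hf, hc g hg]
    ring

theorem IsAdmissibleType.exists_eq_smul (hβ : Monotone β) (hE : E ≠ 0)
    (horbit : ∀ x, matEval E x ≠ 0 → x ∈ lowerOrbit x₀) (hf : IsAdmissibleType β f a kP kM)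
    (hg : IsAdmissibleType β g a kP kM) (hf0 : f ≠ 0) (hg0 : g ≠ 0) :
    ∃ c : F, c ≠ 0 ∧ f = c • g := by
  have hf₀ := hf.matEval_ne_zero hβ hE horbit hf0
  have hg₀ := hg.matEval_ne_zero hβ hE horbit hg0
  refine ⟨(matEval g x₀)⁻¹ * matEval f x₀, by simp [hf₀, hg₀], ?_⟩
  rw [mul_smul, ← hf.smul_eq_smul hβ hE horbit hg, inv_smul_smul₀ hg₀]

end Uniqueness

theorem exists_lower_upper_of_leadingMinor_ne_zero {F : Type*} [Field F] {k : ℕ}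
    (M : Matrix (Fin k) (Fin k) F)
    (hM : ∀ j (hj : j < k), (M.submatrix (Fin.castLE hj.le) (Fin.castLE hj.le)).det ≠ 0) :
    ∃ L U : Matrix (Fin k) (Fin k) F,
      L.IsLowerTriangular ∧ L.det = 1 ∧ U.IsUpperTriangular ∧ M = L * U := by
  induction k with
  | zero => exact ⟨1, 1, blockTriangular_one, det_one, blockTriangular_one, Subsingleton.elim _ _⟩
  | succ k ih =>
    set N := (blockEquiv F k 1).symm M
    obtain ⟨L₁, U₁, hL₁, hdetL₁, hU₁, hN₁₁⟩ := ih N.toBlocks₁₁ fun j hj ↦ hM j (by omega)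
    have hdetN₁₁ : N.toBlocks₁₁.det ≠ 0 := hM k k.lt_succ_self
    have hL₁u : IsUnit L₁.det := by simp [hdetL₁]
    have hU₁u : IsUnit U₁.det := by
      rw [hN₁₁, det_mul, hdetL₁, one_mul] at hdetN₁₁
      exact hdetN₁₁.isUnit
    refine ⟨blockEquiv F k 1 (fromBlocks L₁ 0 (N.toBlocks₂₁ * U₁⁻¹) 1),
      blockEquiv F k 1 (fromBlocks U₁ (L₁⁻¹ * N.toBlocks₁₂) 0
        (N.toBlocks₂₂ - N.toBlocks₂₁ * N.toBlocks₁₁⁻¹ * N.toBlocks₁₂)),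
      isLowerTriangular_blockEquiv_fromBlocks _ hL₁ blockTriangular_one, ?_,
      isUpperTriangular_blockEquiv_fromBlocks _ hU₁ fun i j h ↦ by omega, ?_⟩
    · rw [det_reindexAlgEquiv, det_fromBlocks_zero₁₂, hdetL₁, det_one, one_mul]
    · rw [← map_mul, ← AlgEquiv.symm_apply_eq, fromBlocks_multiply]
      change N = _
      conv_lhs => rw [← fromBlocks_toBlocks N]
      rw [fromBlocks_inj]
      refine ⟨by simp [hN₁₁], by simp [mul_nonsing_inv_cancel_left _ _ hL₁u],
        by simp [nonsing_inv_mul_cancel_right _ _ hU₁u], ?_⟩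
      rw [hN₁₁, Matrix.mul_inv_rev]
      simp only [Matrix.mul_assoc, Matrix.one_mul]
      abel

section OpenOrbit

variable {R S : Type*} [CommRing R] [CommRing S] {F : Type*} [Field F] {n : ℕ}

def exchangeMatrix (R : Type*) [CommRing R] (n : ℕ) : Matrix (Fin n) (Fin n) R :=
  Fin.revPerm.permMatrix R

theorem exchangeMatrix_mul_mul_exchangeMatrix (M : Matrix (Fin n) (Fin n) R) :
    exchangeMatrix R n * M * exchangeMatrix R n = M.submatrix Fin.rev Fin.rev := by
  simp only [exchangeMatrix, PEquiv.toMatrix_toPEquiv_mul, PEquiv.mul_toMatrix_toPEquiv,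
    Fin.revPerm_symm, submatrix_submatrix, CompTriple.comp_eq]
  rfl

theorem exchangeMatrix_mul_self : exchangeMatrix R n * exchangeMatrix R n = 1 := by
  simpa [submatrix_one _ Fin.rev_injective] using
    exchangeMatrix_mul_mul_exchangeMatrix (R := R) (n := n) 1

theorem Matrix.IsUpperTriangular.exchangeMatrix_conj {U : Matrix (Fin n) (Fin n) R}
    (hU : U.IsUpperTriangular) :
    (exchangeMatrix R n * U * exchangeMatrix R n).IsLowerTriangular := fun i j h ↦ by
  rw [exchangeMatrix_mul_mul_exchangeMatrix]
  exact hU (Fin.rev_lt_rev.mpr h)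

theorem RingHom.map_exchangeMatrix (φ : R →+* S) :
    φ.mapMatrix (exchangeMatrix R n) = exchangeMatrix S n := by
  ext i j
  simp [exchangeMatrix, PEquiv.toMatrix_apply, apply_ite φ]

def orbitBase (R : Type*) [CommRing R] (n : ℕ) : Matrix (Fin (n + n)) (Fin (n + n)) R :=
  blockEquiv R n n (fromBlocks 1 1 (exchangeMatrix R n) 0)

theorem blockEquiv_mem_lowerOrbit_orbitBase {X : Matrix (Fin n ⊕ Fin n) (Fin n ⊕ Fin n) F}
    (h₁₁ : IsUnit X.toBlocks₁₁.det) (h₁₂ : IsUnit X.toBlocks₁₂.det)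
    (hC : ∀ j : Fin (n + 1), (((X.toBlocks₂₁ * X.toBlocks₁₁⁻¹ - X.toBlocks₂₂ * X.toBlocks₁₂⁻¹) *
      exchangeMatrix F n).submatrix (Fin.castLE j.is_le) (Fin.castLE j.is_le)).det ≠ 0) :
    blockEquiv F n n X ∈ lowerOrbit (orbitBase F n) := by
  set C := X.toBlocks₂₁ * X.toBlocks₁₁⁻¹ - X.toBlocks₂₂ * X.toBlocks₁₂⁻¹
  set J := exchangeMatrix F n
  -- Solving `[[p₁, 0], [q, L]] * [[1, 1], [J, 0]] * diag(A, B) = X` blockwise forces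
  -- `A = p₁⁻¹ X₁₁`, `B = p₁⁻¹ X₁₂`, `q = X₂₂ X₁₂⁻¹ p₁` and `C p₁ = L J`; the LU decomposition
  -- `C J = L U` provides the lower-triangular `p₁ = J U⁻¹ J`.
  obtain ⟨L, U, hL, hdetL, hU, hLU⟩ :=
    exists_lower_upper_of_leadingMinor_ne_zero (C * J) fun j hj ↦ hC ⟨j, by omega⟩
  have hdetU : IsUnit U.det := by
    have h := hC (Fin.last n)
    simp only [Fin.val_last, Fin.castLE_rfl, submatrix_id_id] at h
    rw [hLU, det_mul, hdetL, one_mul] at h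
    exact h.isUnit
  have := U.invertibleOfIsUnitDet hdetU
  set p₁ := J * U⁻¹ * J
  have hdetJ : IsUnit J.det :=
    .of_mul_eq_one J.det (by rw [← det_mul, exchangeMatrix_mul_self, det_one])
  have hdetp₁ : IsUnit p₁.det := by
    simp only [p₁, det_mul]
    exact (hdetJ.mul (isUnit_nonsing_inv_det _ hdetU)).mul hdetJ
  have hCp₁ : C * p₁ = L * J := by
    rw [show C * p₁ = C * J * U⁻¹ * J by simp only [p₁, Matrix.mul_assoc], hLU,
      Matrix.mul_assoc L, mul_nonsing_inv _ hdetU, Matrix.mul_one]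
  have hq : X.toBlocks₂₂ * X.toBlocks₁₂⁻¹ * p₁ + C * p₁ = X.toBlocks₂₁ * X.toBlocks₁₁⁻¹ * p₁ := by
    rw [← Matrix.add_mul, add_sub_cancel]
  refine ⟨blockEquiv F n n (fromBlocks p₁ 0 (X.toBlocks₂₂ * X.toBlocks₁₂⁻¹ * p₁) L),
    p₁⁻¹ * X.toBlocks₁₁, p₁⁻¹ * X.toBlocks₁₂,
    isLowerTriangular_blockEquiv_fromBlocks _
      (IsUpperTriangular.exchangeMatrix_conj (blockTriangular_inv_of_blockTriangular hU)) hL,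
    ?_, ?_, ?_, ?_⟩
  · rw [det_reindexAlgEquiv, det_fromBlocks_zero₁₂, hdetL, mul_one]
    exact hdetp₁
  · rw [det_mul]
    exact (isUnit_nonsing_inv_det _ hdetp₁).mul h₁₁
  · rw [det_mul]
    exact (isUnit_nonsing_inv_det _ hdetp₁).mul h₁₂
  · rw [orbitBase, blockDiagEmb_eq_blockEquiv, ← map_mul, ← map_mul, EmbeddingLike.apply_eq_iff_eq,
      fromBlocks_multiply, fromBlocks_multiply]
    conv_lhs => rw [← fromBlocks_toBlocks X]
    simp only [Matrix.mul_one, Matrix.mul_zero, Matrix.zero_mul, add_zero, zero_add]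
    rw [← hCp₁, hq]
    simp only [Matrix.mul_assoc, mul_nonsing_inv_cancel_left _ _ hdetp₁, nonsing_inv_mul _ h₁₁,
      nonsing_inv_mul _ h₁₂, Matrix.mul_one]

def schurAdjugate (X : Matrix (Fin n ⊕ Fin n) (Fin n ⊕ Fin n) R) : Matrix (Fin n) (Fin n) R :=
  X.toBlocks₁₂.det • (X.toBlocks₂₁ * X.toBlocks₁₁.adjugate) -
    X.toBlocks₁₁.det • (X.toBlocks₂₂ * X.toBlocks₁₂.adjugate)

def orbitDiscriminant (X : Matrix (Fin n ⊕ Fin n) (Fin n ⊕ Fin n) R) : R :=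
  X.toBlocks₁₁.det * X.toBlocks₁₂.det * ∏ j : Fin (n + 1),
    ((schurAdjugate X * exchangeMatrix R n).submatrix (Fin.castLE j.is_le) (Fin.castLE j.is_le)).det

theorem schurAdjugate_eq_smul {X : Matrix (Fin n ⊕ Fin n) (Fin n ⊕ Fin n) F}
    (h₁₁ : IsUnit X.toBlocks₁₁.det) (h₁₂ : IsUnit X.toBlocks₁₂.det) :
    schurAdjugate X = (X.toBlocks₁₁.det * X.toBlocks₁₂.det) •
      (X.toBlocks₂₁ * X.toBlocks₁₁⁻¹ - X.toBlocks₂₂ * X.toBlocks₁₂⁻¹) := by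
  have hadj {M : Matrix (Fin n) (Fin n) F} (h : IsUnit M.det) : M.adjugate = M.det • M⁻¹ := by
    rw [Matrix.inv_def, smul_smul, Ring.mul_inverse_cancel _ h, one_smul]
  rw [schurAdjugate, hadj h₁₁, hadj h₁₂, smul_sub, Matrix.mul_smul, Matrix.mul_smul, smul_smul,
    smul_smul, mul_comm X.toBlocks₁₂.det]

theorem RingHom.map_schurAdjugate (φ : R →+* S) (X : Matrix (Fin n ⊕ Fin n) (Fin n ⊕ Fin n) R) :
    φ.mapMatrix (schurAdjugate X) = schurAdjugate (φ.mapMatrix X) := by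
  have hadj (M : Matrix (Fin n) (Fin n) R) : M.adjugate.map φ = (M.map φ).adjugate :=
    φ.map_adjugate M
  rw [schurAdjugate, RingHom.mapMatrix_apply, Matrix.map_sub _ (map_sub φ),
    map_smul' _ _ _ (map_mul φ), map_smul' _ _ _ (map_mul φ), Matrix.map_mul, Matrix.map_mul,
    hadj, hadj, RingHom.map_det, RingHom.map_det]
  rfl

theorem RingHom.map_orbitDiscriminant (φ : R →+* S)
    (X : Matrix (Fin n ⊕ Fin n) (Fin n ⊕ Fin n) R) :
    φ (orbitDiscriminant X) = orbitDiscriminant (φ.mapMatrix X) := by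
  simp only [orbitDiscriminant, map_mul, map_prod, RingHom.map_det]
  simp only [← φ.map_schurAdjugate, ← φ.map_exchangeMatrix, ← map_mul]
  rfl

theorem orbitDiscriminant_orbitBase :
    orbitDiscriminant ((blockEquiv R n n).symm (orbitBase R n)) = 1 := by
  simp [orbitBase, orbitDiscriminant, schurAdjugate, exchangeMatrix_mul_self,
    submatrix_one _ (Fin.castLE_injective _)]

theorem blockEquiv_mem_lowerOrbit_of_orbitDiscriminant_ne_zero
    {X : Matrix (Fin n ⊕ Fin n) (Fin n ⊕ Fin n) F} (hX : orbitDiscriminant X ≠ 0) :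
    blockEquiv F n n X ∈ lowerOrbit (orbitBase F n) := by
  obtain ⟨⟨h₁₁, h₁₂⟩, hminors⟩ : (X.toBlocks₁₁.det ≠ 0 ∧ X.toBlocks₁₂.det ≠ 0) ∧ _ := by
    simpa [orbitDiscriminant, prod_ne_zero_iff] using hX
  refine blockEquiv_mem_lowerOrbit_orbitBase h₁₁.isUnit h₁₂.isUnit fun j ↦ ?_
  have h := hminors j
  simp only [schurAdjugate_eq_smul h₁₁.isUnit h₁₂.isUnit, smul_mul, submatrix_smul, Pi.smul_apply,
    det_smul] at h
  exact right_ne_zero_of_mul h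

theorem exists_ne_zero_forall_mem_lowerOrbit (F : Type*) [Field F] (n : ℕ) :
    ∃ E : MvPolynomial (Fin (n + n) × Fin (n + n)) F, E ≠ 0 ∧
      ∀ x, matEval E x ≠ 0 → x ∈ lowerOrbit (orbitBase F n) := by
  let E := orbitDiscriminant ((blockEquiv (MvPolynomial (Fin (n + n) × Fin (n + n)) F) n n).symm
    (Matrix.of fun i j ↦ MvPolynomial.X (i, j)))
  have hE (x : Matrix (Fin (n + n)) (Fin (n + n)) F) :
      matEval E x = orbitDiscriminant ((blockEquiv F n n).symm x) := by
    rw [matEval, RingHom.map_orbitDiscriminant]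
    congr 1
    ext i j
    simp
  refine ⟨E, fun h0 ↦ ?_, fun x hx ↦ ?_⟩
  · have h1 := hE (orbitBase F n)
    rw [h0, orbitDiscriminant_orbitBase] at h1
    simp [matEval] at h1
  · rw [← AlgEquiv.apply_symm_apply (blockEquiv F n n) x]
    exact blockEquiv_mem_lowerOrbit_of_orbitDiscriminant_ne_zero (hE x ▸ hx)

theorem fMinusPoly_ne_zero [Nontrivial R] : fMinusPoly R n n ≠ 0 := fun h ↦ by
  simpa [h, matEval, orbitBase] using matEval_fMinusPoly (orbitBase R n)

end OpenOrbit

/-- §3.2, Case ε(M′)=1: d even with d⁺(M) = d⁻(M) = d/2 = n, d⁺(M′) = d⁻(M′)+1.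
If φ⁺, φ⁻ are (nonzero) polynomials of admissibility types
{(a_μ),(d⁺(M′),d⁻(M′))} and {(a_μ),(d⁻(M′),d⁺(M′))} (same exponents a⁺ = a⁻),
then φ⁺·f⁻ and φ⁻·f⁺ have the same admissibility type
{(a_μ + 1_{μ≤𝔭}),(d⁺(M′),d⁺(M′))}, and consequently, by the uniqueness of
polynomials of a given admissibility type, φ⁺·f⁻ = c · φ⁻·f⁺ for a nonzero
scalar c. -/
theorem phi_f_relation
    {F : Type*} [Field F] [Infinite F] {m n : ℕ}
    (s : Fin m → ℕ) (β : Fin (n + n) → Fin m)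
    (hmono : Monotone β)
    (hcard : ∀ μ, (Finset.univ.filter fun i => β i = μ).card = s μ)
    (pp : ℕ)
    (hsum : ∑ μ ∈ Finset.univ.filter (fun μ : Fin m => (μ : ℕ) < pp), s μ = n)
    (dP' dM' : ℕ) (hε : dP' = dM' + 1)
    (φP φM : MvPolynomial (Fin (n + n) × Fin (n + n)) F)
    (a : Fin m → ℤ)
    (hφP : IsAdmissibleType β φP a (dP' : ℤ) (dM' : ℤ))
    (hφM : IsAdmissibleType β φM a (dM' : ℤ) (dP' : ℤ))
    (hφP0 : φP ≠ 0) (hφM0 : φM ≠ 0) :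
    (IsAdmissibleType β (φP * fMinusPoly F n n)
        (fun μ => a μ + if (μ : ℕ) < pp then 1 else 0) (dP' : ℤ) (dP' : ℤ) ∧
      IsAdmissibleType β (φM * fPlusPoly F n n)
        (fun μ => a μ + if (μ : ℕ) < pp then 1 else 0) (dP' : ℤ) (dP' : ℤ)) ∧
    ∃ c : F, c ≠ 0 ∧ φP * fMinusPoly F n n = c • (φM * fPlusPoly F n n) := by
  have hβ (i : Fin (n + n)) : (β i : ℕ) < pp ↔ (i : ℕ) < n := by
    have hT : #{j | (β j : ℕ) < pp} = n := by
      rw [← sum_congr rfl fun μ _ ↦ hcard μ, sum_card_fiberwise_eq_card_filter] at hsum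
      simpa using hsum
    rw [Fin.val_lt_card_iff_of_monotone hmono, hT]
  have hdP' : (dP' : ℤ) = dM' + 1 := by rw [hε, Nat.cast_succ]
  have hP := hφP.mul_fMinusPoly hβ
  have hM := hφM.mul_fPlusPoly hβ
  rw [← hdP'] at hP hM
  obtain ⟨E, hE, horbit⟩ := exists_ne_zero_forall_mem_lowerOrbit F n
  exact ⟨⟨hP, hM⟩, hP.exists_eq_smul hmono hE horbit hM (mul_ne_zero hφP0 fMinusPoly_ne_zero)
    (mul_ne_zero hφM0 fPlusPoly_ne_zero)⟩
end

section
/- Let X ∈ M_d(F) be written in block rows X_i ∈ F^d, each split as (X_i⁺, X_i⁻) with X_i⁺ ∈ F^{d⁺}, X_i⁻ ∈ F^{d⁻}, and similarly Y ∈ M_{d′}(F) with rows (Y_l⁺, Y_l⁻). Form the square matrix Z⁺ whose rows are indexed by a set S of pairs (i,l) with |S| = d⁺d⁺′ + d⁻d⁻′, consisting of vectors (X_i⁺ ⊗ Y_l⁺, X_i⁻ ⊗ Y_l⁻) ∈ F^{d⁺d⁺′ + d⁻d⁻′}. Then det Z⁺, as a polynomial in the entries of X for fixed Y, transforms under right multiplication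 of X by diag(a,b) ∈ GL(d⁺) × GL(d⁻) by the factor det(a)^{d⁺′} det(b)^{d⁻′}. -/
open Matrix Finset

/-- The square matrix Z⁺ of size d⁺d⁺′ + d⁻d⁻′ whose row indexed by r ∈ ι
(a set of pairs (i,l), via π₁, π₂) is the concatenated vector
(X_i⁺ ⊗ Y_l⁺, X_i⁻ ⊗ Y_l⁻); columns are identified with
(Fin d⁺ × Fin d⁺′) ⊕ (Fin d⁻ × Fin d⁻′) via the equivalence e. -/
def Zplus {F : Type*} [CommRing F] {D D' dp dm dp' dm' : ℕ}
    {ι : Type*}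
    (e : ι ≃ (Fin dp × Fin dp') ⊕ (Fin dm × Fin dm'))
    (π₁ : ι → Fin D) (π₂ : ι → Fin D')
    (X : Matrix (Fin D) (Fin (dp + dm)) F)
    (Y : Matrix (Fin D') (Fin (dp' + dm')) F) :
    Matrix ι ι F := fun r c =>
  match e c with
  | Sum.inl (j, k) => X (π₁ r) (Fin.castAdd dm j) * Y (π₂ r) (Fin.castAdd dm' k)
  | Sum.inr (j, k) => X (π₁ r) (Fin.natAdd dp j) * Y (π₂ r) (Fin.natAdd dp' k)

open Kronecker in
private lemma mul_blockDiagEmb_castAdd {F : Type*} [CommRing F] {D dp dm : ℕ}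
    (X : Matrix (Fin D) (Fin (dp + dm)) F)
    (a : Matrix (Fin dp) (Fin dp) F) (b : Matrix (Fin dm) (Fin dm) F)
    (i : Fin D) (j : Fin dp) :
    (X * blockDiagEmb a b) i (Fin.castAdd dm j) =
      ∑ j', X i (Fin.castAdd dm j') * a j' j := by
  rw [Matrix.mul_apply, ← Equiv.sum_comp finSumFinEquiv]
  rw [Fintype.sum_sum_type]
  simp [blockDiagEmb]

private lemma mul_blockDiagEmb_natAdd {F : Type*} [CommRing F] {D dp dm : ℕ}
    (X : Matrix (Fin D) (Fin (dp + dm)) F)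
    (a : Matrix (Fin dp) (Fin dp) F) (b : Matrix (Fin dm) (Fin dm) F)
    (i : Fin D) (j : Fin dm) :
    (X * blockDiagEmb a b) i (Fin.natAdd dp j) =
      ∑ j', X i (Fin.natAdd dp j') * b j' j := by
  rw [Matrix.mul_apply, ← Equiv.sum_comp finSumFinEquiv]
  rw [Fintype.sum_sum_type]
  simp [blockDiagEmb]

open Kronecker in
private lemma Zplus_mul_blockDiagEmb {F : Type*} [Field F] {D D' dp dm dp' dm' : ℕ}
    {ι : Type*} [Fintype ι] [DecidableEq ι]
    (e : ι ≃ (Fin dp × Fin dp') ⊕ (Fin dm × Fin dm'))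
    (π₁ : ι → Fin D) (π₂ : ι → Fin D')
    (X : Matrix (Fin D) (Fin (dp + dm)) F)
    (Y : Matrix (Fin D') (Fin (dp' + dm')) F)
    (a : Matrix (Fin dp) (Fin dp) F) (b : Matrix (Fin dm) (Fin dm) F) :
    Zplus e π₁ π₂ (X * blockDiagEmb a b) Y =
      Zplus e π₁ π₂ X Y *
        (Matrix.fromBlocks (a ⊗ₖ (1 : Matrix (Fin dp') (Fin dp') F)) 0 0
          (b ⊗ₖ (1 : Matrix (Fin dm') (Fin dm') F))).submatrix e e := by
  ext r c
  rw [Matrix.mul_apply, ← Equiv.sum_comp e.symm (fun c' => Zplus e π₁ π₂ X Y r c' *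
      (Matrix.fromBlocks (a ⊗ₖ (1 : Matrix (Fin dp') (Fin dp') F)) 0 0
        (b ⊗ₖ (1 : Matrix (Fin dm') (Fin dm') F))).submatrix e e c' c)]
  simp only [Matrix.submatrix_apply, Equiv.apply_symm_apply]
  rw [Fintype.sum_sum_type]
  simp only [Fintype.sum_prod_type]
  rcases h : e c with ⟨j, k⟩ | ⟨j, k⟩ <;>
    simp only [Zplus, h, Matrix.fromBlocks_apply₁₁, Matrix.fromBlocks_apply₁₂,
      Matrix.fromBlocks_apply₂₁, Matrix.fromBlocks_apply₂₂, Matrix.kroneckerMap_apply,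
      Matrix.zero_apply, mul_zero, Finset.sum_const_zero, add_zero, zero_add,
      Matrix.one_apply, mul_ite, mul_one, mul_zero, Finset.sum_ite_eq',
      Finset.mem_univ, if_true, mul_blockDiagEmb_castAdd, mul_blockDiagEmb_natAdd,
      Finset.sum_mul]
  · exact Finset.sum_congr rfl fun j' _ => by simp only [Equiv.apply_symm_apply]; ring
  · exact Finset.sum_congr rfl fun j' _ => by simp only [Equiv.apply_symm_apply]; ring

/-- Under right multiplication of X by diag(a,b) ∈ GL(d⁺) × GL(d⁻), the
determinant of Z⁺ transforms by the factor det(a)^{d⁺′} · det(b)^{d⁻′}. -/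
theorem det_Zplus_transform
    {F : Type*} [Field F] {D D' dp dm dp' dm' : ℕ}
    {ι : Type*} [Fintype ι] [DecidableEq ι]
    (e : ι ≃ (Fin dp × Fin dp') ⊕ (Fin dm × Fin dm'))
    (π₁ : ι → Fin D) (π₂ : ι → Fin D')
    (X : Matrix (Fin D) (Fin (dp + dm)) F)
    (Y : Matrix (Fin D') (Fin (dp' + dm')) F)
    (a : Matrix (Fin dp) (Fin dp) F) (ha : IsUnit a.det)
    (b : Matrix (Fin dm) (Fin dm) F) (hb : IsUnit b.det) :
    (Zplus e π₁ π₂ (X * blockDiagEmb a b) Y).det =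
      a.det ^ dp' * b.det ^ dm' * (Zplus e π₁ π₂ X Y).det := by
  rw [Zplus_mul_blockDiagEmb, Matrix.det_mul, Matrix.det_submatrix_equiv_self,
    Matrix.det_fromBlocks_zero₁₂, Matrix.det_kronecker, Matrix.det_kronecker]
  simp [Fintype.card_fin, mul_comm, mul_assoc, mul_left_comm]
end
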